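/- Let M be a CC term and fr a name not occurring in program P. Then M is terminating (has a final reduct) under P if and only if there exists a term t such that M[fr:=t] is terminating under P. -/

import Mathlib

/-- Terms of continuation calculus: names (coded as naturals) and dot. -/
inductive Tm where
  | name : ℕ → Tm
  | dot : Tm → Tm → Tm
deriving DecidableEq

/-- Right-hand sides of rules: names, variables (de Bruijn-style indices
into the left-hand side's variable list), and dot. -/
inductive Rhs where
  | name : ℕ → Rhs
  | var : ℕ → Rhs
  | dot : Rhs → Rhs → Rhs
deriving DecidableEq

/-- A rule `n.x₁.⋯.xₖ → r`: head name, arity `k`, and right-hand side. -/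
structure Rule where
  head : ℕ
  arity : ℕ
  rhs : Rhs
deriving DecidableEq

/-- A program is a finite set of rules. -/
abbrev Program := Finset Rule

/-- Variables occurring in a right-hand side. -/
def Rhs.HasVar : Rhs → ℕ → Prop
  | .name _, _ => False
  | .var w, v => w = v
  | .dot a b, v => a.HasVar v ∨ b.HasVar v

/-- Well-formedness: every variable of a right-hand side occurs in the
left-hand side, and there is at most one rule per head name. -/
def Program.Wf (P : Program) : Prop :=
  (∀ r ∈ P, ∀ v, r.rhs.HasVar v → v < r.arity) ∧
  (∀ r₁ ∈ P, ∀ r₂ ∈ P, r₁.head = r₂.head → r₁ = r₂)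

/-- `n.t₁.⋯.tₖ` : left-associated application of a term to a list of terms. -/
def Tm.apps : Tm → List Tm → Tm
  | h, [] => h
  | h, t :: ts => Tm.apps (h.dot t) ts

/-- Instantiation of a right-hand side with the terms matched by the
left-hand side variables; fails if some variable is out of range. -/
def Rhs.inst (ts : List Tm) : Rhs → Option Tm
  | .name n => some (.name n)
  | .var v => ts[v]?
  | .dot a b => do pure (.dot (← a.inst ts) (← b.inst ts))

/-- One-step evaluation `M →_P N`. -/
def Step (P : Program) (M N : Tm) : Prop :=
  ∃ r ∈ P, ∃ ts : List Tm, ts.length = r.arity ∧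
    M = Tm.apps (.name r.head) ts ∧ r.rhs.inst ts = some N

/-- Multi-step evaluation `M →*_P N`. -/
def Steps (P : Program) : Tm → Tm → Prop := Relation.ReflTransGen (Step P)

/-- `M` is final: it has no successor. -/
def Final (P : Program) (M : Tm) : Prop := ¬ ∃ N, Step P M N

/-- `M` terminates: it evaluates to a final term. -/
def Terminates (P : Program) (M : Tm) : Prop := ∃ N, Steps P M N ∧ Final P N

/-- The name `m` occurs in a term. -/
def Tm.HasName (m : ℕ) : Tm → Prop
  | .name n => n = m
  | .dot a b => a.HasName m ∨ b.HasName m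

/-- The name `m` occurs in a right-hand side. -/
def Rhs.HasName (m : ℕ) : Rhs → Prop
  | .name n => n = m
  | .var _ => False
  | .dot a b => a.HasName m ∨ b.HasName m

/-- The name `m` occurs (is mentioned) in a program. -/
def Program.HasName (P : Program) (m : ℕ) : Prop :=
  ∃ r ∈ P, r.head = m ∨ r.rhs.HasName m

/-- The name `m` is defined by the program (is the head of some rule). -/
def Program.Defines (P : Program) (m : ℕ) : Prop :=
  ∃ r ∈ P, r.head = m

/-- Substitution of a term for a name, `M[fr := t]`. -/
def Tm.subName (m : ℕ) (t : Tm) : Tm → Tm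
  | .name n => if n = m then t else .name n
  | .dot a b => .dot (Tm.subName m t a) (Tm.subName m t b)

/-- Common reduct relation `M =_P N`. -/
def CommonRed (P : Program) (M N : Tm) : Prop :=
  ∃ t, Steps P M t ∧ Steps P N t

/-- Observational equivalence `M ≈_P N`. -/
def ObsEq (P : Program) (M N : Tm) : Prop :=
  ∀ P' : Program, P'.Wf → P ⊆ P' →
    ∀ X : Tm, (Terminates P' (X.dot M) ↔ Terminates P' (X.dot N))

/-- Renaming of names in a term. -/
def Tm.rename (f : ℕ → ℕ) : Tm → Tm
  | .name n => .name (f n)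
  | .dot a b => .dot (a.rename f) (b.rename f)

/-- Renaming of names in a right-hand side. -/
def Rhs.rename (f : ℕ → ℕ) : Rhs → Rhs
  | .name n => .name (f n)
  | .var v => .var v
  | .dot a b => .dot (a.rename f) (b.rename f)

/-- Renaming of names in a rule. -/
def Rule.rename (f : ℕ → ℕ) (r : Rule) : Rule :=
  ⟨f r.head, r.arity, r.rhs.rename f⟩

/-- Renaming of names in a program. -/
def Program.rename (f : ℕ → ℕ) (P : Program) : Program :=
  P.image (Rule.rename f)

/-- The fresh substitution `[n⃗ := m⃗]` as a function on names. -/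
def renFun (ns ms : List ℕ) (n : ℕ) : ℕ :=
  ((ns.zip ms).lookup n).getD n

/-- `M` has arity `k` under `P`: `M = n.q₁.⋯.qᵢ` where `n` has a rule of
arity `i + k`. -/
def Tm.ArityIs (P : Program) (M : Tm) (k : ℕ) : Prop :=
  ∃ r ∈ P, ∃ ts : List Tm, M = Tm.apps (.name r.head) ts ∧ ts.length + k = r.arity

/-!
Substituting for a name `fr` that `P` never mentions commutes with evaluation: a step `M → N`
gives `M[fr:=t] → N[fr:=t]`, and conversely, when `M` is not final its head is a name defined
by `P`, so the redex pattern survives the substitution and every step of `M[fr:=t]` is the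
image of a step of `M`. Following a terminating evaluation of `M[fr:=t]` backwards along these
images therefore reaches a final reduct of `M`. For the other direction take `t = fr`.
-/

namespace Tm

theorem subName_name_self (fr : ℕ) (M : Tm) : subName fr (.name fr) M = M := by
  induction M with
  | name n => by_cases h : n = fr <;> simp [subName, h]
  | dot a b iha ihb => simp [subName, iha, ihb]

theorem subName_apps (fr : ℕ) (t : Tm) (ts : List Tm) :
    ∀ h : Tm, subName fr t (h.apps ts) = (subName fr t h).apps (ts.map (subName fr t)) := by
  induction ts with
  | nil => intro h; rfl
  | cons u ts ih => intro h; simp [apps, ih, subName]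

def headName : Tm → ℕ
  | .name n => n
  | .dot a _ => a.headName

def args : Tm → List Tm
  | .name _ => []
  | .dot a b => a.args ++ [b]

theorem headName_apps (ts : List Tm) : ∀ h : Tm, (h.apps ts).headName = h.headName := by
  induction ts with
  | nil => intro h; rfl
  | cons t ts ih => intro h; simp [apps, ih, headName]

theorem args_apps (ts : List Tm) : ∀ h : Tm, (h.apps ts).args = h.args ++ ts := by
  induction ts with
  | nil => intro h; simp [apps]
  | cons t ts ih => intro h; simp [apps, ih, args]

theorem apps_name_inj {n m : ℕ} {ts us : List Tm} :
    (Tm.name n).apps ts = (Tm.name m).apps us ↔ n = m ∧ ts = us := by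
  refine ⟨fun h => ⟨?_, ?_⟩, by rintro ⟨rfl, rfl⟩; rfl⟩
  · simpa [headName_apps, headName] using congrArg headName h
  · simpa [args_apps, args] using congrArg args h

end Tm

theorem Rhs.inst_map_subName {fr : ℕ} {r : Rhs} (hr : ¬ r.HasName fr) (t : Tm) (ts : List Tm) :
    r.inst (ts.map (Tm.subName fr t)) = (r.inst ts).map (Tm.subName fr t) := by
  induction r with
  | name n =>
    have hn : n ≠ fr := hr
    simp [Rhs.inst, Tm.subName, hn]
  | var v => simp [Rhs.inst, List.getElem?_map]
  | dot a b iha ihb =>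
    simp only [Rhs.HasName, not_or] at hr
    cases hia : a.inst ts <;> cases hib : b.inst ts <;>
      simp [Rhs.inst, iha hr.1, ihb hr.2, hia, hib, Tm.subName]

section FreshName

variable {P : Program} {fr : ℕ}

theorem Step.subName (hfr : ¬ P.HasName fr) (t : Tm) {M N : Tm} (h : Step P M N) :
    Step P (Tm.subName fr t M) (Tm.subName fr t N) := by
  obtain ⟨r, hr, ts, hlen, rfl, hN⟩ := h
  have hhead : r.head ≠ fr := fun he => hfr ⟨r, hr, Or.inl he⟩
  have hrhs : ¬ r.rhs.HasName fr := fun he => hfr ⟨r, hr, Or.inr he⟩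
  refine ⟨r, hr, ts.map (Tm.subName fr t), by simp [hlen], ?_, ?_⟩
  · simp [Tm.subName_apps, Tm.subName, hhead]
  · rw [Rhs.inst_map_subName hrhs, hN, Option.map_some]

theorem Final.of_subName (hfr : ¬ P.HasName fr) {t M : Tm} (h : Final P (Tm.subName fr t M)) :
    Final P M :=
  fun ⟨_, hN⟩ => h ⟨_, hN.subName hfr t⟩

theorem exists_step_of_step_subName (hfr : ¬ P.HasName fr) {t M X : Tm}
    (hM : ¬ Final P M) (hX : Step P (Tm.subName fr t M) X) :
    ∃ N, Step P M N ∧ Tm.subName fr t N = X := by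
  obtain ⟨_, r, hr, ts, hlen, rfl, -⟩ := not_not.mp hM
  obtain ⟨r', hr', us, hlen', hMt, hX⟩ := hX
  have hhead : r.head ≠ fr := fun he => hfr ⟨r, hr, Or.inl he⟩
  have hrhs : ¬ r'.rhs.HasName fr := fun he => hfr ⟨r', hr', Or.inr he⟩
  simp only [Tm.subName_apps, Tm.subName, if_neg hhead, Tm.apps_name_inj] at hMt
  obtain ⟨hrr', rfl⟩ := hMt
  rw [Rhs.inst_map_subName hrhs, Option.map_eq_some_iff] at hX
  obtain ⟨N, hN, rfl⟩ := hX
  exact ⟨N, ⟨r', hr', ts, by simpa using hlen', by rw [hrr'], hN⟩, rfl⟩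

theorem Terminates.of_subName (hfr : ¬ P.HasName fr) {t M : Tm}
    (h : Terminates P (Tm.subName fr t M)) : Terminates P M := by
  obtain ⟨F, hsteps, hF⟩ := h
  generalize hMt : Tm.subName fr t M = Mt at hsteps
  induction hsteps using Relation.ReflTransGen.head_induction_on generalizing M with
  | refl => exact ⟨M, .refl, (hMt ▸ hF).of_subName hfr⟩
  | head hX _ ih =>
    by_cases hM : Final P M
    · exact ⟨M, .refl, hM⟩
    obtain ⟨N, hN, rfl⟩ := exists_step_of_step_subName hfr hM (hMt ▸ hX)
    obtain ⟨G, hG, hGf⟩ := ih rfl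
    exact ⟨G, .head hN hG, hGf⟩

end FreshName

theorem terminates_iff_exists_subst_terminates_general (P : Program) (fr : ℕ)
    (hfr : ¬ P.HasName fr) (M : Tm) :
    Terminates P M ↔ ∃ t : Tm, Terminates P (Tm.subName fr t M) :=
  ⟨fun h => ⟨.name fr, by rwa [Tm.subName_name_self]⟩,
    fun ⟨_, h⟩ => h.of_subName hfr⟩

theorem terminates_iff_exists_subst_terminates (P : Program) (hP : P.Wf) (fr : ℕ)
    (hfr : ¬ P.HasName fr) (M : Tm) :
    Terminates P M ↔ ∃ t : Tm, Terminates P (Tm.subName fr t M) :=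
  terminates_iff_exists_subst_terminates_general P fr hfr M
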